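/- arXiv:1601.03762 — 3 statements merged into one kernel-verified Lean document; each statement's English description precedes it below -/
import Mathlib

section
/- Let D ⊆ ℝ^n be a domain and f : D → ℝ^n a continuous open map that is closed onto its image f(D) (i.e. maps sets closed in D to sets closed in f(D)). Then for every x₀ ∈ D̄ ∩ ℝ^n and every r > 0, the set (∂(f(B(x₀,r) ∩ D))) ∩ f(D) is contained in f(S(x₀,r) ∩ D), where B(x₀,r) is the open ball and S(x₀,r) the sphere of radius r about x₀. -/
/-! A point `y ∈ f(D)` on the boundary of the open set `f(B ∩ D)` lies in the closure of
`f(B̄ ∩ D)`, which is closed in `f(D)` because `B̄ ∩ D` is closed in `D`. So `y = f x` with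
`x ∈ B̄ ∩ D`, and `x ∉ B` since `y ∉ f(B ∩ D)`: hence `x` lies on the sphere. -/

open Set Metric

lemma IsClosed.closure_inter_inter_self {X : Type*} [TopologicalSpace X] {C : Set X}
    (hC : IsClosed C) (D : Set X) : closure (C ∩ D) ∩ D = C ∩ D :=
  Subset.antisymm (inter_subset_inter_left D (hC.closure_subset_iff.mpr inter_subset_left))
    (subset_inter subset_closure inter_subset_right)

lemma frontier_image_inter_subset_image_sdiff {X Y : Type*} [TopologicalSpace Y] {f : X → Y}
    {U K D : Set X} (hUK : U ⊆ K) (hU : IsOpen (f '' U))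
    (hK : closure (f '' K) ∩ f '' D = f '' K) :
    frontier (f '' U) ∩ f '' D ⊆ f '' (K \ U) := by
  rintro y ⟨hy_front, hy_image⟩
  rw [hU.frontier_eq] at hy_front
  have hy_K : y ∈ f '' K :=
    hK ▸ ⟨closure_mono (image_mono hUK) hy_front.1, hy_image⟩
  obtain ⟨x, hx_K, rfl⟩ := hy_K
  exact ⟨x, ⟨hx_K, fun hx_U => hy_front.2 (mem_image_of_mem f hx_U)⟩, rfl⟩

theorem stmt5_general (n : ℕ) (D : Set (EuclideanSpace ℝ (Fin n)))
    (hD : IsOpen D)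
    (f : EuclideanSpace ℝ (Fin n) → EuclideanSpace ℝ (Fin n))
    (hopen : ∀ U ⊆ D, IsOpen U → IsOpen (f '' U))
    (hclosed : ∀ C ⊆ D, closure C ∩ D = C → closure (f '' C) ∩ f '' D = f '' C) :
    ∀ x₀ ∈ closure D, ∀ r > (0 : ℝ),
      frontier (f '' (Metric.ball x₀ r ∩ D)) ∩ f '' D ⊆
        f '' (Metric.sphere x₀ r ∩ D) := by
  intro x₀ _ r _
  have hball_open : IsOpen (f '' (ball x₀ r ∩ D)) :=
    hopen _ inter_subset_right (isOpen_ball.inter hD)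
  have hclosedBall_closed :
      closure (f '' (closedBall x₀ r ∩ D)) ∩ f '' D = f '' (closedBall x₀ r ∩ D) :=
    hclosed _ inter_subset_right (isClosed_closedBall.closure_inter_inter_self D)
  refine (frontier_image_inter_subset_image_sdiff
    (inter_subset_inter_left D ball_subset_closedBall) hball_open hclosedBall_closed).trans
    (image_mono ?_)
  rw [← inter_sdiff_distrib_right, closedBall_sdiff_ball]

/-- If `D ⊆ ℝⁿ` is a domain and `f` is continuous and open on `D`, and closed
onto its image (closed subsets of `D` map to closed subsets of `f(D)`), then for every
`x₀ ∈ closure D` and `r > 0`,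
`∂(f(B(x₀,r) ∩ D)) ∩ f(D) ⊆ f(S(x₀,r) ∩ D)`. -/
theorem stmt5 (n : ℕ) (D : Set (EuclideanSpace ℝ (Fin n)))
    (hD : IsOpen D) (hDc : IsConnected D)
    (f : EuclideanSpace ℝ (Fin n) → EuclideanSpace ℝ (Fin n))
    (hf : ContinuousOn f D)
    (hopen : ∀ U ⊆ D, IsOpen U → IsOpen (f '' U))
    (hclosed : ∀ C ⊆ D, closure C ∩ D = C → closure (f '' C) ∩ f '' D = f '' C) :
    ∀ x₀ ∈ closure D, ∀ r > (0 : ℝ),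
      frontier (f '' (Metric.ball x₀ r ∩ D)) ∩ f '' D ⊆
        f '' (Metric.sphere x₀ r ∩ D) :=
  stmt5_general n D hD f hopen hclosed
end

section
/- Let D ⊆ ℝ^n be a domain, f : D → ℝ^n continuous, open, and closed onto its image, K ⊆ f(D) a compact set, and b ∈ ∂D. Then there exists ε₁ > 0 such that for all r ∈ (0, ε₁), K ⊆ f(D) \ closure(f(B(b,r) ∩ D)). -/
/-!
If the conclusion failed, compactness of `K` would give a point `y ∈ K` which is a cluster value
of `f` at `b` along `D`. Since `f` is open, no fibre of `f` has interior in `D`, so `y` is even a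
cluster value along `{x ∈ D | f x ≠ y}`: there are `vₘ ∈ D` with `vₘ → b`, `f vₘ → y` and
`f vₘ ≠ y`. As `b ∉ D`, the set `{vₘ}` is relatively closed in `D`; its image is then relatively
closed in `f(D)` and must contain `y`, a contradiction.
-/

open Filter Topology Metric Set

section

variable {X Y : Type*} [TopologicalSpace X] [TopologicalSpace Y] {D : Set X} {f : X → Y}

theorem closure_image_inter_image_subset
    (hclosed : ∀ C ⊆ D, closure C ∩ D = C → closure (f '' C) ∩ f '' D = f '' C)
    {A : Set X} (hA : A ⊆ D) : closure (f '' A) ∩ f '' D ⊆ f '' (closure A ∩ D) := by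
  have hrel : closure (closure A ∩ D) ∩ D = closure A ∩ D :=
    Subset.antisymm
      (inter_subset_inter_left _ (closure_minimal inter_subset_left isClosed_closure))
      (subset_inter subset_closure inter_subset_right)
  rw [← hclosed _ inter_subset_right hrel]
  exact inter_subset_inter_left _
    (closure_mono (image_mono (subset_inter subset_closure hA)))

theorem frequently_nhds_apply_ne [∀ y : Y, NeBot (𝓝[≠] y)] (hD : IsOpen D)
    (hopen : ∀ U ⊆ D, IsOpen U → IsOpen (f '' U)) {x : X} (hx : x ∈ D) (y : Y) :
    ∃ᶠ v in 𝓝 x, f v ≠ y := by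
  intro hconst
  obtain ⟨U, hUD, hU, hxU⟩ := mem_nhds_iff.1 (inter_mem hconst (hD.mem_nhds hx))
  have hfU : f '' U = {y} :=
    eq_singleton_iff_unique_mem.2
      ⟨⟨x, hxU, not_not.1 (hUD hxU).1⟩, fun _ ⟨v, hv, hfv⟩ => hfv ▸ not_not.1 (hUD hv).1⟩
  exact not_isOpen_singleton y (hfU ▸ hopen U (hUD.trans inter_subset_right) hU)

theorem MapClusterPt.nhdsWithin_sep_apply_ne [∀ y : Y, NeBot (𝓝[≠] y)] (hD : IsOpen D)
    (hf : ContinuousOn f D) (hopen : ∀ U ⊆ D, IsOpen U → IsOpen (f '' U)) {b : X} {y : Y}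
    (h : MapClusterPt y (𝓝[D] b) f) : MapClusterPt y (𝓝[{x ∈ D | f x ≠ y}] b) f := by
  rw [(nhds_basis_opens y).mapClusterPt_iff_frequently] at h ⊢
  rintro V ⟨hyV, hV⟩
  simp only [frequently_nhdsWithin_iff] at h ⊢
  refine frequently_frequently_nhds.1 ((h V ⟨hyV, hV⟩).mono fun x ⟨hxV, hxD⟩ => ?_)
  have hD_nhds : D ∈ 𝓝 x := hD.mem_nhds hxD
  have hnear : ∀ᶠ v in 𝓝 x, f v ∈ V ∧ v ∈ D :=
    ((hf.continuousAt hD_nhds).eventually_mem (hV.mem_nhds hxV)).and hD_nhds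
  exact ((frequently_nhds_apply_ne hD hopen hxD y).and_eventually hnear).mono
    fun v ⟨hne, hvV, hvD⟩ => ⟨hvV, hvD, hne⟩

variable [T2Space X] [FirstCountableTopology X] [FirstCountableTopology Y]

theorem mem_image_of_mapClusterPt_nhdsWithin
    (hclosed : ∀ C ⊆ D, closure C ∩ D = C → closure (f '' C) ∩ f '' D = f '' C)
    {S : Set X} (hS : S ⊆ D) {b : X} (hb : b ∉ D) {y : Y} (h : MapClusterPt y (𝓝[S] b) f)
    (hy : y ∈ f '' D) : y ∈ f '' S := by
  obtain ⟨u, hu, hfu⟩ := exists_seq_comp_tendsto h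
  obtain ⟨hub, huS⟩ := tendsto_nhdsWithin_iff.1 hu
  obtain ⟨φ, hφ, hφS⟩ := extraction_of_eventually_atTop huS
  have hvb : Tendsto (u ∘ φ) atTop (𝓝 b) := hub.comp hφ.tendsto_atTop
  -- taking the closure of the range only adds the limit `b`, which is not in `D`
  have hrel : closure (range (u ∘ φ)) ∩ D ⊆ range (u ∘ φ) := fun z ⟨hz, hzD⟩ =>
    (closure_minimal (subset_insert _ _) hvb.isCompact_insert_range.isClosed hz).resolve_left
      (ne_of_mem_of_not_mem hzD hb)
  have hy_cl : y ∈ closure (f '' range (u ∘ φ)) :=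
    mem_closure_of_tendsto (hfu.comp hφ.tendsto_atTop)
      (Eventually.of_forall fun m => mem_image_of_mem f (mem_range_self m))
  obtain ⟨z, hz, rfl⟩ := closure_image_inter_image_subset hclosed
    (range_subset_iff.2 fun m => hS (hφS m)) ⟨hy_cl, hy⟩
  obtain ⟨m, rfl⟩ := hrel hz
  exact mem_image_of_mem f (hφS m)

theorem eventually_nhdsWithin_apply_notMem [∀ y : Y, NeBot (𝓝[≠] y)] (hD : IsOpen D)
    (hf : ContinuousOn f D) (hopen : ∀ U ⊆ D, IsOpen U → IsOpen (f '' U))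
    (hclosed : ∀ C ⊆ D, closure C ∩ D = C → closure (f '' C) ∩ f '' D = f '' C)
    {K : Set Y} (hK : IsCompact K) (hKD : K ⊆ f '' D) {b : X} (hb : b ∉ D) :
    ∀ᶠ x in 𝓝[D] b, f x ∉ K := by
  by_contra hfreq
  obtain ⟨y, hyK, hy⟩ :=
    hK.exists_mapClusterPt_of_frequently ((not_eventually.1 hfreq).mono fun _ => not_not.1)
  obtain ⟨x, ⟨-, hxy⟩, hfx⟩ := mem_image_of_mapClusterPt_nhdsWithin hclosed (sep_subset _ _) hb
    (hy.nhdsWithin_sep_apply_ne hD hf hopen) (hKD hyK)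
  exact hxy hfx

end

theorem stmt6_general (n : ℕ) (D : Set (EuclideanSpace ℝ (Fin n)))
    (hD : IsOpen D)
    (f : EuclideanSpace ℝ (Fin n) → EuclideanSpace ℝ (Fin n))
    (hf : ContinuousOn f D)
    (hopen : ∀ U ⊆ D, IsOpen U → IsOpen (f '' U))
    (hclosed : ∀ C ⊆ D, closure C ∩ D = C → closure (f '' C) ∩ f '' D = f '' C)
    (K : Set (EuclideanSpace ℝ (Fin n))) (hK : IsCompact K) (hKD : K ⊆ f '' D)
    (b : EuclideanSpace ℝ (Fin n)) (hb : b ∈ frontier D) :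
    ∃ ε₁ > (0 : ℝ), ∀ r ∈ Set.Ioo (0 : ℝ) ε₁,
      K ⊆ f '' D \ closure (f '' (Metric.ball b r ∩ D)) := by
  rw [hD.frontier_eq] at hb
  obtain ⟨hb_cl, hbD⟩ := hb
  obtain ⟨x, hx⟩ := closure_nonempty_iff.1 ⟨b, hb_cl⟩
  have : Nontrivial (EuclideanSpace ℝ (Fin n)) := nontrivial_of_ne x b (ne_of_mem_of_not_mem hx hbD)
  obtain ⟨ε₁, hε₁, hK_far⟩ := nhdsWithin_basis_ball.eventually_iff.1
    (eventually_nhdsWithin_apply_notMem hD hf hopen hclosed hK hKD hbD)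
  refine ⟨ε₁, hε₁, fun r hr k hk => ⟨hKD hk, fun hk_cl => ?_⟩⟩
  obtain ⟨z, ⟨hz_cl, hzD⟩, rfl⟩ :=
    closure_image_inter_image_subset hclosed inter_subset_right ⟨hk_cl, hKD hk⟩
  have hz : z ∈ ball b ε₁ := closedBall_subset_ball hr.2
    (closure_ball_subset_closedBall (closure_mono inter_subset_left hz_cl))
  exact hK_far ⟨hz, hzD⟩ hk

/-- If `D ⊆ ℝⁿ` is a domain, `f` is continuous, open and closed onto its
image on `D`, `K ⊆ f(D)` is compact and `b ∈ ∂D`, then there is `ε₁ > 0` with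
`K ⊆ f(D) \ closure (f(B(b,r) ∩ D))` for all `r ∈ (0, ε₁)`. -/
theorem stmt6 (n : ℕ) (D : Set (EuclideanSpace ℝ (Fin n)))
    (hD : IsOpen D) (hDc : IsConnected D)
    (f : EuclideanSpace ℝ (Fin n) → EuclideanSpace ℝ (Fin n))
    (hf : ContinuousOn f D)
    (hopen : ∀ U ⊆ D, IsOpen U → IsOpen (f '' U))
    (hclosed : ∀ C ⊆ D, closure C ∩ D = C → closure (f '' C) ∩ f '' D = f '' C)
    (K : Set (EuclideanSpace ℝ (Fin n))) (hK : IsCompact K) (hKD : K ⊆ f '' D)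
    (b : EuclideanSpace ℝ (Fin n)) (hb : b ∈ frontier D) :
    ∃ ε₁ > (0 : ℝ), ∀ r ∈ Set.Ioo (0 : ℝ) ε₁,
      K ⊆ f '' D \ closure (f '' (Metric.ball b r ∩ D)) :=
  stmt6_general n D hD f hf hopen hclosed K hK hKD b hb
end

section
/- Let D ⊆ ℝ^n be a bounded domain and f : D → ℝ^n continuous, open, and discrete. If f is boundary preserving in the sense that C(f, ∂D) ⊆ ∂f(D), then for every compact K ⊆ f(D), the preimage f⁻¹(K) is compact in D. -/
open Filter Topology

/-- For a bounded domain `D ⊆ ℝⁿ` and `f` continuous, open and discrete on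
`D`, if `f` is boundary preserving (`C(f,∂D) ⊆ ∂f(D)`), then the preimage of every compact
`K ⊆ f(D)` is compact in `D`. -/
theorem stmt14 (n : ℕ) (D : Set (EuclideanSpace ℝ (Fin n)))
    (hD : IsOpen D) (hDc : IsConnected D) (hDb : Bornology.IsBounded D)
    (f : EuclideanSpace ℝ (Fin n) → EuclideanSpace ℝ (Fin n))
    (hf : ContinuousOn f D)
    (hopen : ∀ U ⊆ D, IsOpen U → IsOpen (f '' U))
    (hdiscrete : ∀ y : EuclideanSpace ℝ (Fin n), ∀ x ∈ D, f x = y →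
      ∃ U ∈ 𝓝 x, ∀ z ∈ U ∩ D, f z = y → z = x)
    (hbp : ∀ y : EuclideanSpace ℝ (Fin n),
      (∃ x : ℕ → EuclideanSpace ℝ (Fin n), (∀ m, x m ∈ D) ∧
        (∃ x₀ ∈ frontier D, Tendsto x atTop (𝓝 x₀)) ∧
        Tendsto (fun m => f (x m)) atTop (𝓝 y)) →
      y ∈ frontier (f '' D)) :
    ∀ K ⊆ f '' D, IsCompact K → IsCompact {x ∈ D | f x ∈ K} := by
  intro K hK hKc
  set S := {x ∈ D | f x ∈ K} with hS
  have hSb : Bornology.IsBounded S := hDb.subset (fun x hx => hx.1)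
  have hclosed : IsClosed S := by
    apply IsSeqClosed.isClosed
    intro x p hxS hxp
    by_cases hp : p ∈ D
    · refine ⟨hp, ?_⟩
      have hxD : ∀ m, x m ∈ D := fun m => (hxS m).1
      have ht : Tendsto x atTop (𝓝[D] p) :=
        tendsto_nhdsWithin_iff.mpr ⟨hxp, Eventually.of_forall hxD⟩
      have hft : Tendsto (fun m => f (x m)) atTop (𝓝 (f p)) :=
        ((hf p hp).tendsto).comp ht
      exact hKc.isClosed.mem_of_tendsto hft (Eventually.of_forall fun m => (hxS m).2)
    · exfalso
      have hpc : p ∈ closure D := mem_closure_of_tendsto hxp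
        (Eventually.of_forall fun m => (hxS m).1)
      have hpf : p ∈ frontier D := by
        rw [hD.frontier_eq]; exact ⟨hpc, hp⟩
      obtain ⟨y, hyK, φ, hφ, hfy⟩ := hKc.tendsto_subseq
        (x := fun m => f (x m)) (fun m => (hxS m).2)
      have hyfr : y ∈ frontier (f '' D) := by
        refine hbp y ⟨x ∘ φ, fun m => (hxS (φ m)).1,
          ⟨p, hpf, hxp.comp hφ.tendsto_atTop⟩, hfy⟩
      have hfDopen : IsOpen (f '' D) := hopen D subset_rfl hD
      rw [hfDopen.frontier_eq] at hyfr
      exact hyfr.2 (hK hyK)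
  exact Metric.isCompact_of_isClosed_isBounded hclosed hSb
end
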